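/- For every ideal I of A, the set I⋈^f J := {(i, f(i)+j) : i ∈ I, j ∈ J} is an ideal of the ring A⋈^f J, and the composition of the canonical embedding ι : A → A⋈^f J, ι(a) = (a, f(a)), with the canonical projection A⋈^f J → (A⋈^f J)/(I⋈^f J) is a surjective ring homomorphism whose kernel equals I (hence (A⋈^f J)/(I⋈^f J) is isomorphic to A/I). -/

import Mathlib

section Amalgamation

variable {A B : Type*} [CommRing A] [CommRing B]

/-- The amalgamation `A ⋈^f J` of `A` with `B` along the ideal `J` of `B` with respect to
the ring homomorphism `f : A → B`, realized as the subring
`{(a, f a + j) | a ∈ A, j ∈ J}` of `A × B`. -/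
def amalg (f : A →+* B) (J : Ideal B) : Subring (A × B) where
  carrier := {x : A × B | x.2 - f x.1 ∈ J}
  zero_mem' := by simp
  one_mem' := by simp
  add_mem' := by
    intro x y hx hy
    simp only [Set.mem_setOf_eq, Prod.fst_add, Prod.snd_add, map_add] at *
    have h : x.2 + y.2 - (f x.1 + f y.1) = x.2 - f x.1 + (y.2 - f y.1) := by ring
    rw [h]; exact J.add_mem hx hy
  neg_mem' := by
    intro x hx
    simp only [Set.mem_setOf_eq, Prod.fst_neg, Prod.snd_neg, map_neg] at *
    have h : -x.2 - -f x.1 = -(x.2 - f x.1) := by ring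
    rw [h]; exact J.neg_mem hx
  mul_mem' := by
    intro x y hx hy
    simp only [Set.mem_setOf_eq, Prod.fst_mul, Prod.snd_mul, map_mul] at *
    have h : x.2 * y.2 - f x.1 * f y.1 = x.2 * (y.2 - f y.1) + (x.2 - f x.1) * f y.1 := by ring
    rw [h]
    exact J.add_mem (J.mul_mem_left _ hy) (J.mul_mem_right _ hx)

lemma mem_amalg_iff (f : A →+* B) (J : Ideal B) (x : A × B) :
    x ∈ amalg f J ↔ x.2 - f x.1 ∈ J := Iff.rfl

/-- The canonical embedding `ι : A → A ⋈^f J`, `a ↦ (a, f a)`. -/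
def iota (f : A →+* B) (J : Ideal B) : A →+* amalg f J :=
  ((RingHom.id A).prod f).codRestrict (amalg f J) (fun a => by
    simp [mem_amalg_iff])

end Amalgamation

/-
The first projection `π : A ⋈^f J → A` is a retraction of `ι`, and `I ⋈^f J = π⁻¹(I)`.
Whenever a ring map `π` has a section `ι`, composing `ι` with the projection onto `R ⧸ π⁻¹(I)`
is onto, because `x - ι (π x) ∈ ker π ⊆ π⁻¹(I)`, and its kernel is `ι⁻¹(π⁻¹(I)) = I`.
-/

section Retraction

variable {R S : Type*} [CommRing R] [CommRing S] {π : R →+* S} {ι : S →+* R}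

theorem Ideal.ker_quotientMk_comap_comp_of_leftInverse (hι : π.comp ι = RingHom.id S)
    (I : Ideal S) : RingHom.ker ((Ideal.Quotient.mk (I.comap π)).comp ι) = I := by
  rw [← RingHom.comap_ker, Ideal.mk_ker, Ideal.comap_comap, hι, Ideal.comap_id]

theorem Ideal.quotientMk_comap_comp_surjective_of_leftInverse (hι : π.comp ι = RingHom.id S)
    (I : Ideal S) : Function.Surjective ((Ideal.Quotient.mk (I.comap π)).comp ι) := by
  intro y
  obtain ⟨x, rfl⟩ := Ideal.Quotient.mk_surjective y
  refine ⟨π x, Ideal.Quotient.eq.mpr (Ideal.mem_comap.mpr ?_)⟩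
  have hπι : π (ι (π x)) = π x := RingHom.congr_fun hι (π x)
  simp [hπι]

end Retraction

section Amalgamation

variable {A B : Type*} [CommRing A] [CommRing B] (f : A →+* B) (J : Ideal B)

def amalgFst : amalg f J →+* A :=
  (RingHom.fst A B).comp (amalg f J).subtype

theorem amalgFst_comp_iota : (amalgFst f J).comp (iota f J) = RingHom.id A := rfl

theorem coe_comap_amalgFst (I : Ideal A) :
    ((I.comap (amalgFst f J) : Ideal (amalg f J)) : Set (amalg f J)) =
      {x : amalg f J | ∃ i ∈ I, ∃ j ∈ J, (x : A × B) = (i, f i + j)} := by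
  ext ⟨⟨a, b⟩, hab⟩
  constructor
  · intro ha
    exact ⟨a, ha, b - f a, hab, by simp⟩
  · rintro ⟨i, hi, j, -, hx⟩
    obtain ⟨rfl, -⟩ := Prod.mk.inj hx
    exact hi

end Amalgamation

theorem stmt1 {A B : Type*} [CommRing A] [CommRing B] (f : A →+* B) (J : Ideal B)
    (I : Ideal A) :
    ∃ K : Ideal (amalg f J),
      ((K : Set (amalg f J)) =
        {x : amalg f J | ∃ i ∈ I, ∃ j ∈ J, (x : A × B) = (i, f i + j)}) ∧
      Function.Surjective ((Ideal.Quotient.mk K).comp (iota f J)) ∧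
      RingHom.ker ((Ideal.Quotient.mk K).comp (iota f J)) = I ∧
      Nonempty ((amalg f J ⧸ K) ≃+* A ⧸ I) := by
  have hsurj := Ideal.quotientMk_comap_comp_surjective_of_leftInverse (amalgFst_comp_iota f J) I
  have hker := Ideal.ker_quotientMk_comap_comp_of_leftInverse (amalgFst_comp_iota f J) I
  refine ⟨I.comap (amalgFst f J), coe_comap_amalgFst f J I, hsurj, hker, ?_⟩
  exact ⟨((Ideal.quotEquivOfEq hker.symm).trans (RingHom.quotientKerEquivOfSurjective hsurj)).symm⟩
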